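/- Let c̃ > 1. Then there exist constants C₁ > 0 and C₂ > 0 (with C₁ depending on c̃) such that for all u > 0: C₁·(1 + |log u|)·e^{−c̃u} ≤ L̃_2(u) ≤ C₂·(1 + |log u|)·e^{−u}, where L̃_2(u) = ∫_0^∞ exp(−s − u²/(4s))·s^{−1} ds. -/

import Mathlib

/-!
By AM–GM, `s + u²/(4s) ≥ u`, so the integrand is at most `e^{-u}/s`. For the upper bound split
`(0, ∞)` at `a ≤ b`: on `(0, a]` with `8a ≤ u` the integrand is bounded by `8e^{-u}/u²` (from
`x e^{-x} ≤ 1`), on `(a, b]` the bound `e^{-u}/s` contributes `e^{-u} log (b/a)`, and beyond `b`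
the factor `e^{-s}` is integrable; take `a = u²/8, b = 1` for `u ≤ 1` and `a = u/8, b = u` for
`u ≥ 1`. For the lower bound, the integrand is at least `e^{-b-u²/(4a)}/s` on `[a, b]`: the window
`[u, 1]` yields the `-log u` for small `u`, and `[u/2, u/2 + 1]` yields `≳ e^{-u}/u`, which beats
`(1 + log u) e^{-c̃u}` because `c̃ > 1`.
-/

open MeasureTheory Real Set

/-- `L̃_2(u) = ∫_0^∞ exp(-s - u²/(4s)) s^{-1} ds` for `u > 0` (a constant multiple of `K_0`). -/
noncomputable def Ltilde2 (u : ℝ) : ℝ :=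
  ∫ s in Ioi (0:ℝ), Real.exp (-s - u^2 / (4*s)) * s⁻¹

lemma exp_neg_div_mul_inv_le_inv {c s : ℝ} (hc : 0 < c) (hs : 0 < s) :
    exp (-(c / s)) * s⁻¹ ≤ c⁻¹ := by
  have key : c / s * exp (-(c / s)) ≤ 1 :=
    (mul_exp_neg_le_exp_neg_one _).trans (exp_le_one_iff.mpr (by norm_num))
  calc exp (-(c / s)) * s⁻¹ = c / s * exp (-(c / s)) * c⁻¹ := by field_simp
    _ ≤ c⁻¹ := mul_le_of_le_one_left (by positivity) key

noncomputable def ltilde2Integrand (u s : ℝ) : ℝ := exp (-s - u ^ 2 / (4 * s)) * s⁻¹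

lemma Ltilde2_eq_integral (u : ℝ) : Ltilde2 u = ∫ s in Ioi 0, ltilde2Integrand u s := rfl

section Integrand

variable {u s : ℝ}

lemma ltilde2Integrand_nonneg (hs : 0 < s) : 0 ≤ ltilde2Integrand u s := by
  unfold ltilde2Integrand; positivity

lemma ltilde2Integrand_eq (u s : ℝ) :
    ltilde2Integrand u s = exp (-s) * (exp (-(u ^ 2 / 4 / s)) * s⁻¹) := by
  rw [ltilde2Integrand, ← mul_assoc, ← exp_add, div_div, sub_eq_add_neg]

lemma continuousOn_ltilde2Integrand (u : ℝ) : ContinuousOn (ltilde2Integrand u) (Ioi 0) := by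
  intro s (hs : 0 < s)
  unfold ltilde2Integrand
  exact (ContinuousAt.mul (by fun_prop (disch := positivity)) (continuousAt_inv₀ hs.ne')
    ).continuousWithinAt

lemma integrableOn_const_mul_exp_neg_Ioi (c b : ℝ) :
    IntegrableOn (fun s ↦ c * exp (-s)) (Ioi b) := by
  simpa only [IntegrableOn, neg_mul, one_mul] using
    (exp_neg_integrableOn_Ioi b one_pos).const_mul c

lemma integrableOn_ltilde2Integrand (hu : 0 < u) : IntegrableOn (ltilde2Integrand u) (Ioi 0) := by
  have hexp : IntegrableOn (fun s ↦ (u ^ 2 / 4)⁻¹ * exp (-s)) (Ioi 0) :=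
    integrableOn_const_mul_exp_neg_Ioi _ 0
  refine hexp.mono' ((continuousOn_ltilde2Integrand u).aestronglyMeasurable measurableSet_Ioi) ?_
  filter_upwards [ae_restrict_mem measurableSet_Ioi] with s (hs : 0 < s)
  rw [norm_of_nonneg (ltilde2Integrand_nonneg hs), ltilde2Integrand_eq, mul_comm]
  gcongr
  exact exp_neg_div_mul_inv_le_inv (by positivity) hs

lemma ltilde2Integrand_le_exp_neg_mul_inv (hs : 0 < s) :
    ltilde2Integrand u s ≤ exp (-u) * s⁻¹ := by
  have amgm : u ≤ s + u ^ 2 / (4 * s) := by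
    rw [← sub_nonneg]
    have : s + u ^ 2 / (4 * s) - u = (2 * s - u) ^ 2 / (4 * s) := by field_simp; ring
    rw [this]; positivity
  unfold ltilde2Integrand
  gcongr
  linarith

lemma ltilde2Integrand_le_of_eight_mul_le (hs : 0 < s) (hsu : 8 * s ≤ u) :
    ltilde2Integrand u s ≤ exp (-u) * (u ^ 2 / 8)⁻¹ := by
  have hu : 0 < u := by linarith
  have hexp : -s - u ^ 2 / (4 * s) ≤ -u + -(u ^ 2 / 8 / s) := by
    have : u ≤ u ^ 2 / 8 / s := by rw [le_div_iff₀ hs]; nlinarith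
    have : u ^ 2 / (4 * s) = 2 * (u ^ 2 / 8 / s) := by field_simp; ring
    linarith
  calc ltilde2Integrand u s ≤ exp (-u + -(u ^ 2 / 8 / s)) * s⁻¹ := by
        unfold ltilde2Integrand; gcongr
    _ = exp (-u) * (exp (-(u ^ 2 / 8 / s)) * s⁻¹) := by rw [exp_add, mul_assoc]
    _ ≤ exp (-u) * (u ^ 2 / 8)⁻¹ := by
        gcongr; exact exp_neg_div_mul_inv_le_inv (by positivity) hs

lemma ltilde2Integrand_le_inv_mul_exp_neg {b : ℝ} (hb : 0 < b) (hbs : b ≤ s) :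
    ltilde2Integrand u s ≤ b⁻¹ * exp (-s) := by
  rw [ltilde2Integrand_eq, mul_comm]
  gcongr
  have hs : 0 < s := hb.trans_le hbs
  exact (mul_le_of_le_one_left (by positivity) (exp_le_one_iff.mpr (neg_nonpos.mpr
    (by positivity)))).trans (inv_anti₀ hb hbs)

lemma exp_mul_inv_le_ltilde2Integrand {a b : ℝ} (ha : 0 < a) (has : a ≤ s) (hsb : s ≤ b) :
    exp (-b - u ^ 2 / (4 * a)) * s⁻¹ ≤ ltilde2Integrand u s := by
  unfold ltilde2Integrand
  have hs : 0 < s := ha.trans_le has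
  gcongr ?_ * _
  gcongr

end Integrand

lemma setIntegral_Ioi_eq_add_add {f : ℝ → ℝ} {c a b : ℝ} (hca : c ≤ a) (hab : a ≤ b)
    (hf : IntegrableOn f (Ioi c)) :
    ∫ s in Ioi c, f s = (∫ s in Ioc c a, f s) + (∫ s in Ioc a b, f s) + ∫ s in Ioi b, f s := by
  have hfa : IntegrableOn f (Ioi a) := hf.mono_set (Ioi_subset_Ioi hca)
  rw [← Ioc_union_Ioi_eq_Ioi hca, setIntegral_union Ioc_disjoint_Ioi_same measurableSet_Ioi
      (hf.mono_set Ioc_subset_Ioi_self) hfa, ← Ioc_union_Ioi_eq_Ioi hab,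
    setIntegral_union Ioc_disjoint_Ioi_same measurableSet_Ioi
      (hfa.mono_set Ioc_subset_Ioi_self) (hfa.mono_set (Ioi_subset_Ioi hab)), add_assoc]

lemma setIntegral_Ioc_inv {a b : ℝ} (ha : 0 < a) (hab : a ≤ b) :
    ∫ s in Ioc a b, s⁻¹ = log (b / a) := by
  rw [← intervalIntegral.integral_of_le hab, integral_inv_of_pos ha (ha.trans_le hab)]

lemma integrableOn_inv_Ioc {a b : ℝ} (ha : 0 < a) : IntegrableOn (fun s : ℝ ↦ s⁻¹) (Ioc a b) :=
  (continuousOn_inv₀.mono fun _ hs ↦ (ha.trans_le hs.1).ne').integrableOn_compact isCompact_Icc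
    |>.mono_set Ioc_subset_Icc_self

lemma Ltilde2_le_of_split {u a b : ℝ} (ha : 0 < a) (hau : 8 * a ≤ u) (hab : a ≤ b) :
    Ltilde2 u ≤ exp (-u) * (8 * a / u ^ 2 + log (b / a)) + b⁻¹ * exp (-b) := by
  have hu : 0 < u := by linarith
  have hb : 0 < b := ha.trans_le hab
  have hf := integrableOn_ltilde2Integrand hu
  rw [Ltilde2_eq_integral, setIntegral_Ioi_eq_add_add ha.le hab hf]
  have near_zero : ∫ s in Ioc 0 a, ltilde2Integrand u s ≤ a * (exp (-u) * (u ^ 2 / 8)⁻¹) := by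
    calc ∫ s in Ioc 0 a, ltilde2Integrand u s ≤ ∫ _ in Ioc 0 a, exp (-u) * (u ^ 2 / 8)⁻¹ :=
          setIntegral_mono_on (hf.mono_set Ioc_subset_Ioi_self)
            (integrableOn_const measure_Ioc_lt_top.ne) measurableSet_Ioc
            fun s hs ↦ ltilde2Integrand_le_of_eight_mul_le hs.1 (by linarith [hs.2])
      _ = a * (exp (-u) * (u ^ 2 / 8)⁻¹) := by simp [ha.le]
  have middle : ∫ s in Ioc a b, ltilde2Integrand u s ≤ exp (-u) * log (b / a) := by
    calc ∫ s in Ioc a b, ltilde2Integrand u s ≤ ∫ s in Ioc a b, exp (-u) * s⁻¹ :=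
          setIntegral_mono_on (hf.mono_set (Ioc_subset_Ioi_self.trans (Ioi_subset_Ioi ha.le)))
            ((integrableOn_inv_Ioc ha).const_mul _) measurableSet_Ioc
            fun s hs ↦ ltilde2Integrand_le_exp_neg_mul_inv (ha.trans hs.1)
      _ = exp (-u) * log (b / a) := by rw [integral_const_mul, setIntegral_Ioc_inv ha hab]
  have tail : ∫ s in Ioi b, ltilde2Integrand u s ≤ b⁻¹ * exp (-b) := by
    calc ∫ s in Ioi b, ltilde2Integrand u s ≤ ∫ s in Ioi b, b⁻¹ * exp (-s) :=
          setIntegral_mono_on (hf.mono_set (Ioi_subset_Ioi hb.le))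
            (integrableOn_const_mul_exp_neg_Ioi _ _) measurableSet_Ioi
            fun s hs ↦ ltilde2Integrand_le_inv_mul_exp_neg hb (le_of_lt hs)
      _ = b⁻¹ * exp (-b) := by rw [integral_const_mul, integral_exp_neg_Ioi]
  have : a * (exp (-u) * (u ^ 2 / 8)⁻¹) = exp (-u) * (8 * a / u ^ 2) := by field_simp
  linarith

lemma log_eight_lt_three : log 8 < 3 := by
  have : log 8 = 3 * log 2 := by
    rw [show (8 : ℝ) = 2 ^ 3 by norm_num, log_pow]; norm_num
  linarith [log_two_lt_d9]

theorem Ltilde2_le {u : ℝ} (hu : 0 < u) : Ltilde2 u ≤ 5 * (1 + |log u|) * exp (-u) := by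
  have hexp := exp_pos (-u)
  rcases le_total u 1 with hu1 | hu1
  · have h := Ltilde2_le_of_split (u := u) (a := u ^ 2 / 8) (b := 1) (by positivity) (by nlinarith)
      (by nlinarith)
    have hlog : log (1 / (u ^ 2 / 8)) = log 8 - 2 * log u := by
      rw [one_div_div, log_div (by norm_num) (by positivity), log_pow]; norm_num
    have htail : (1 : ℝ)⁻¹ * exp (-1) ≤ exp (-u) := by
      rw [inv_one, one_mul]; exact exp_le_exp.mpr (by linarith)
    rw [show 8 * (u ^ 2 / 8) / u ^ 2 = 1 by field_simp, hlog] at h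
    rw [abs_of_nonpos (log_nonpos hu.le hu1)]
    nlinarith [log_eight_lt_three, log_nonpos hu.le hu1]
  · have h := Ltilde2_le_of_split (u := u) (a := u / 8) (b := u) (by positivity) (by linarith)
      (by linarith)
    have hinv : u⁻¹ ≤ 1 := inv_le_one_of_one_le₀ hu1
    rw [show 8 * (u / 8) / u ^ 2 = u⁻¹ by field_simp, show u / (u / 8) = 8 by field_simp] at h
    rw [abs_of_nonneg (log_nonneg hu1)]
    nlinarith [log_eight_lt_three, log_nonneg hu1]

lemma exp_mul_log_le_Ltilde2 {u a b : ℝ} (hu : 0 < u) (ha : 0 < a) (hab : a ≤ b) :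
    exp (-b - u ^ 2 / (4 * a)) * log (b / a) ≤ Ltilde2 u := by
  have hf := integrableOn_ltilde2Integrand hu
  calc exp (-b - u ^ 2 / (4 * a)) * log (b / a)
        = ∫ s in Ioc a b, exp (-b - u ^ 2 / (4 * a)) * s⁻¹ := by
          rw [integral_const_mul, setIntegral_Ioc_inv ha hab]
    _ ≤ ∫ s in Ioc a b, ltilde2Integrand u s :=
          setIntegral_mono_on ((integrableOn_inv_Ioc ha).const_mul _)
            (hf.mono_set fun s hs ↦ ha.trans hs.1) measurableSet_Ioc
            fun s hs ↦ exp_mul_inv_le_ltilde2Integrand ha hs.1.le hs.2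
    _ ≤ Ltilde2 u := setIntegral_mono_set hf
          ((ae_restrict_mem measurableSet_Ioi).mono fun s hs ↦ ltilde2Integrand_nonneg hs)
          (ae_of_all _ fun s hs ↦ ha.trans hs.1)

lemma exp_mul_neg_log_le_Ltilde2 {u : ℝ} (hu : 0 < u) (hu1 : u ≤ 1) :
    exp (-(5 / 4)) * -log u ≤ Ltilde2 u := by
  refine le_trans ?_ (exp_mul_log_le_Ltilde2 hu hu hu1)
  rw [one_div, log_inv, show u ^ 2 / (4 * u) = u / 4 by field_simp]
  gcongr
  · linarith [log_nonpos hu.le hu1]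
  · linarith

lemma two_mul_exp_div_le_Ltilde2 {u : ℝ} (hu : 0 < u) :
    2 * exp (-(u + 1)) / (u + 2) ≤ Ltilde2 u := by
  refine le_trans ?_ (exp_mul_log_le_Ltilde2 (a := u / 2) (b := u / 2 + 1) hu (by positivity)
    (by linarith))
  have hexp : -(u / 2 + 1) - u ^ 2 / (4 * (u / 2)) = -(u + 1) := by field_simp; ring
  have hlog : 2 / (u + 2) ≤ log ((u / 2 + 1) / (u / 2)) := by
    refine Eq.trans_le ?_ (one_sub_inv_le_log_of_pos (by positivity))
    field_simp; ring
  rw [hexp, mul_comm 2, mul_div_assoc]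
  gcongr

lemma le_Ltilde2_of_le_one {u : ℝ} (hu : 0 < u) (hu1 : u ≤ 1) :
    exp (-2) / 3 * (1 + |log u|) ≤ Ltilde2 u := by
  have hlog := log_nonpos hu.le hu1
  have hconst : 2 * exp (-2) / 3 ≤ Ltilde2 u := by
    refine le_trans ?_ (two_mul_exp_div_le_Ltilde2 hu)
    gcongr <;> linarith
  have hlogpart : exp (-2) * -log u ≤ Ltilde2 u :=
    le_trans (mul_le_mul_of_nonneg_right (exp_le_exp.mpr (by norm_num)) (by linarith))
      (exp_mul_neg_log_le_Ltilde2 hu hu1)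
  rw [abs_of_nonpos hlog]
  linarith [exp_pos (-2)]

lemma le_Ltilde2_of_one_le {c u : ℝ} (hc : 1 < c) (hu1 : 1 ≤ u) :
    exp (-1) * (c - 1) ^ 2 / 3 * (1 + |log u|) * exp (-(c * u)) ≤ Ltilde2 u := by
  have hu : 0 < u := by linarith
  have hpoly : (1 + log u) * (u + 2) ≤ 3 * u ^ 2 := by
    nlinarith [log_le_sub_one_of_pos hu, log_nonneg hu1]
  have hquad : ((c - 1) * u) ^ 2 / 2 ≤ exp ((c - 1) * u) := by
    have := quadratic_le_exp_of_nonneg (x := (c - 1) * u) (by nlinarith)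
    nlinarith [mul_pos (sub_pos.mpr hc) hu]
  have hsplit : exp (-(u + 1)) = exp (-1) * exp (-(c * u)) * exp ((c - 1) * u) := by
    rw [← exp_add, ← exp_add]; ring_nf
  refine le_trans ?_ (two_mul_exp_div_le_Ltilde2 hu)
  rw [abs_of_nonneg (log_nonneg hu1), le_div_iff₀ (by positivity), hsplit]
  have hE : 0 < exp (-1) * exp (-(c * u)) := by positivity
  calc exp (-1) * (c - 1) ^ 2 / 3 * (1 + log u) * exp (-(c * u)) * (u + 2)
      = exp (-1) * exp (-(c * u)) * ((c - 1) ^ 2 / 3 * ((1 + log u) * (u + 2))) := by ring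
    _ ≤ exp (-1) * exp (-(c * u)) * ((c - 1) ^ 2 / 3 * (3 * u ^ 2)) := by gcongr
    _ ≤ 2 * (exp (-1) * exp (-(c * u)) * exp ((c - 1) * u)) := by nlinarith

theorem le_Ltilde2 {c u : ℝ} (hc : 1 < c) (hu : 0 < u) :
    min (exp (-2) / 3) (exp (-1) * (c - 1) ^ 2 / 3) * (1 + |log u|) * exp (-(c * u))
      ≤ Ltilde2 u := by
  rcases le_total u 1 with hu1 | hu1
  · calc _ ≤ exp (-2) / 3 * (1 + |log u|) * 1 := by
          gcongr
          · exact min_le_left _ _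
          · exact exp_le_one_iff.mpr (by nlinarith)
      _ ≤ Ltilde2 u := by rw [mul_one]; exact le_Ltilde2_of_le_one hu hu1
  · refine le_trans ?_ (le_Ltilde2_of_one_le hc hu1)
    gcongr
    exact min_le_right _ _

/-- For `c̃ > 1` there are constants `C₁, C₂ > 0` with
`C₁ (1 + |log u|) e^{-c̃u} ≤ L̃_2(u) ≤ C₂ (1 + |log u|) e^{-u}` for all `u > 0`. -/
theorem Ltilde2_bounds (ctilde : ℝ) (hc : 1 < ctilde) :
    ∃ C₁ C₂ : ℝ, 0 < C₁ ∧ 0 < C₂ ∧ ∀ u : ℝ, 0 < u →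
      C₁ * (1 + |Real.log u|) * Real.exp (-(ctilde * u)) ≤ Ltilde2 u ∧
      Ltilde2 u ≤ C₂ * (1 + |Real.log u|) * Real.exp (-u) :=
  ⟨_, 5, lt_min (by positivity) (by have := sub_pos.mpr hc; positivity), by norm_num,
    fun _ hu ↦ ⟨le_Ltilde2 hc hu, Ltilde2_le hu⟩⟩
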